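/- Let A ∈ ℂ^{m×n}, C ∈ ℂ^{m×r} consist of columns of A indexed by the column-selection matrix P ∈ ℂ^{n×r}, V ∈ ℂ^{n×r} have orthonormal columns with V*P invertible, and Π = P(V*P)^{-1}V*. Then ‖(I − C C†) A‖_F ≤ ‖I − Π‖₂ · ‖A (I − V V*)‖_F. -/
import Mathlib


open Matrix BigOperators

/-- Frobenius norm of a complex matrix. -/
noncomputable def frob {m n : Type*} [Fintype m] [Fintype n] (A : Matrix m n ℂ) : ℝ :=
  Real.sqrt (∑ i, ∑ j, ‖A i j‖ ^ 2)

/-- Spectral norm (largest singular value) of a complex matrix. -/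
noncomputable def spec {m n : Type*} [Fintype m] [Fintype n] [DecidableEq n]
    (A : Matrix m n ℂ) : ℝ :=
  ‖LinearMap.toContinuousLinearMap (Matrix.toEuclideanLin A)‖

/-- The column-selection matrix `I(:,p)` built from an index map `p`. -/
def colSel {n r : ℕ} (p : Fin r → Fin n) : Matrix (Fin n) (Fin r) ℂ :=
  Matrix.of fun i j => if i = p j then 1 else 0

/-- `B` is the Moore–Penrose pseudoinverse of `A` (four Penrose conditions). -/
def IsPinv {m n : Type*} [Fintype m] [Fintype n]
    (A : Matrix m n ℂ) (B : Matrix n m ℂ) : Prop :=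
  A * B * A = A ∧ B * A * B = B ∧ (A * B)ᴴ = A * B ∧ (B * A)ᴴ = B * A

open scoped Matrix.Norms.L2Operator in
lemma spec_eq_norm {m n : ℕ} (A : Matrix (Fin m) (Fin n) ℂ) : spec A = ‖A‖ := rfl

lemma spec_nonneg {m n : ℕ} (A : Matrix (Fin m) (Fin n) ℂ) : 0 ≤ spec A :=
  norm_nonneg _

lemma frob_nonneg {m n : ℕ} (A : Matrix (Fin m) (Fin n) ℂ) : 0 ≤ frob A :=
  Real.sqrt_nonneg _

lemma frob_sq {m n : ℕ} (A : Matrix (Fin m) (Fin n) ℂ) :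
    frob A ^ 2 = ∑ i, ∑ j, ‖A i j‖ ^ 2 := by
  rw [frob, Real.sq_sqrt]
  positivity

lemma frob_conjTranspose {m n : ℕ} (A : Matrix (Fin m) (Fin n) ℂ) :
    frob Aᴴ = frob A := by
  unfold frob
  rw [Finset.sum_comm]
  simp [conjTranspose_apply]

lemma spec_conjTranspose {m n : ℕ} (A : Matrix (Fin m) (Fin n) ℂ) :
    spec Aᴴ = spec A := by
  rw [spec_eq_norm, spec_eq_norm]
  exact Matrix.l2_opNorm_conjTranspose A

open scoped Matrix.Norms.L2Operator in
lemma frob_mul_le_spec_mul_frob {m n l : ℕ} (X : Matrix (Fin m) (Fin n) ℂ)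
    (Y : Matrix (Fin n) (Fin l) ℂ) :
    frob (X * Y) ≤ spec X * frob Y := by
  have key : frob (X * Y) ^ 2 ≤ (spec X * frob Y) ^ 2 := by
    have hs1 : (∑ i, ∑ j, ‖(X * Y) i j‖ ^ 2) = ∑ j, ∑ i, ‖(X * Y) i j‖ ^ 2 :=
      Finset.sum_comm
    have hs2 : (∑ i, ∑ j, ‖Y i j‖ ^ 2) = ∑ j, ∑ i, ‖Y i j‖ ^ 2 := Finset.sum_comm
    rw [frob_sq, mul_pow, frob_sq, hs1, hs2, Finset.mul_sum]
    refine Finset.sum_le_sum fun j _ => ?_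
    set y : EuclideanSpace ℂ (Fin n) := (WithLp.equiv 2 _).symm (fun i => Y i j) with hy
    have h1 : ∑ i, ‖(X * Y) i j‖ ^ 2 =
        ‖(EuclideanSpace.equiv (Fin m) ℂ).symm (X *ᵥ fun i => Y i j)‖ ^ 2 := by
      rw [EuclideanSpace.norm_eq, Real.sq_sqrt (by positivity)]
      refine Finset.sum_congr rfl fun i _ => ?_
      congr 1
    have h2 : ∑ i, ‖Y i j‖ ^ 2 = ‖y‖ ^ 2 := by
      rw [EuclideanSpace.norm_eq, Real.sq_sqrt (by positivity)]
      rfl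
    rw [h1, h2]
    have := Matrix.l2_opNorm_mulVec X y
    calc ‖(EuclideanSpace.equiv (Fin m) ℂ).symm (X *ᵥ fun i => Y i j)‖ ^ 2
        ≤ (‖X‖ * ‖y‖) ^ 2 := by
          apply pow_le_pow_left₀ (norm_nonneg _)
          exact this
      _ = spec X ^ 2 * ‖y‖ ^ 2 := by rw [spec_eq_norm]; ring
  have h1 : 0 ≤ spec X * frob Y := by
    rw [spec_eq_norm]
    exact mul_nonneg (norm_nonneg _) (frob_nonneg _)
  exact (pow_le_pow_iff_left₀ (frob_nonneg _) h1 two_ne_zero).mp key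

lemma frob_mul_le_frob_mul_spec {m n l : ℕ} (X : Matrix (Fin m) (Fin n) ℂ)
    (Y : Matrix (Fin n) (Fin l) ℂ) :
    frob (X * Y) ≤ frob X * spec Y := by
  calc frob (X * Y) = frob ((X * Y)ᴴ) := (frob_conjTranspose _).symm
    _ = frob (Yᴴ * Xᴴ) := by rw [conjTranspose_mul]
    _ ≤ spec Yᴴ * frob Xᴴ := frob_mul_le_spec_mul_frob _ _
    _ = frob X * spec Y := by rw [spec_conjTranspose, frob_conjTranspose]; ring

open scoped Matrix.Norms.L2Operator in
lemma spec_proj_le_one {m : ℕ} (M : Matrix (Fin m) (Fin m) ℂ)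
    (hHerm : Mᴴ = M) (hIdem : M * M = M) : spec M ≤ 1 := by
  rw [spec_eq_norm]
  have h : ‖M‖ * ‖M‖ = ‖M‖ := by
    conv_rhs => rw [← hIdem]
    rw [← Matrix.l2_opNorm_conjTranspose_mul_self M, hHerm]
  by_contra hlt
  push_neg at hlt
  nlinarith [norm_nonneg M]

/-- `‖(I − CC†)A‖_F ≤ ‖I − Pr‖₂ ‖A(I − VV*)‖_F` where `C = AP` consists of columns of `A`
and `Pr = P(V*P)⁻¹V*` is the interpolatory projector. -/
theorem frob_one_sub_proj_mul_le {m n r : ℕ}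
    (A : Matrix (Fin m) (Fin n) ℂ)
    (p : Fin r → Fin n) (hp : Function.Injective p)
    (V : Matrix (Fin n) (Fin r) ℂ) (hV : Vᴴ * V = 1)
    (hinv : IsUnit (Vᴴ * colSel p))
    (C : Matrix (Fin m) (Fin r) ℂ) (hC : C = A * colSel p)
    (Cd : Matrix (Fin r) (Fin m) ℂ) (hCd : IsPinv C Cd) :
    frob ((1 - C * Cd) * A)
      ≤ spec (1 - colSel p * (Vᴴ * colSel p)⁻¹ * Vᴴ) * frob (A * (1 - V * Vᴴ)) := by
  obtain ⟨hC1, hC2, hC3, hC4⟩ := hCd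
  set P := colSel p
  set W := (Vᴴ * P)⁻¹
  set Pr : Matrix (Fin n) (Fin n) ℂ := P * W * Vᴴ with hPr
  set E : Matrix (Fin m) (Fin m) ℂ := 1 - C * Cd with hE
  have hdet : IsUnit (Vᴴ * P).det := (Matrix.isUnit_iff_isUnit_det _).mp hinv
  have hWr : (Vᴴ * P) * W = 1 := Matrix.mul_nonsing_inv _ hdet
  -- E * A * Pr = 0
  have hEC : E * C = 0 := by
    rw [hE, Matrix.sub_mul, Matrix.one_mul, Matrix.mul_assoc, ← Matrix.mul_assoc C Cd C, hC1,
      sub_self]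
  have hAPr : A * Pr = C * (W * Vᴴ) := by
    rw [hPr, hC]
    simp only [Matrix.mul_assoc]
  have hEAPr : E * A * Pr = 0 := by
    rw [Matrix.mul_assoc, hAPr, ← Matrix.mul_assoc, hEC, Matrix.zero_mul]
  -- V * Vᴴ * Pr = V * Vᴴ
  have hVPr : Vᴴ * Pr = Vᴴ := by
    rw [hPr, ← Matrix.mul_assoc, ← Matrix.mul_assoc, hWr, Matrix.one_mul]
  have key : E * A = E * (A * (1 - V * Vᴴ)) * (1 - Pr) := by
    have h1 : E * A * (1 - Pr) = E * A := by
      rw [Matrix.mul_sub, Matrix.mul_one, hEAPr, sub_zero]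
    have hV0 : Vᴴ * (1 - Pr) = 0 := by
      rw [Matrix.mul_sub, Matrix.mul_one, hVPr, sub_self]
    have h2 : (1 - V * Vᴴ) * (1 - Pr) = 1 - Pr := by
      rw [Matrix.sub_mul, Matrix.one_mul, Matrix.mul_assoc, hV0, Matrix.mul_zero, sub_zero]
    calc E * A = E * A * (1 - Pr) := h1.symm
      _ = E * (A * ((1 - V * Vᴴ) * (1 - Pr))) := by rw [h2, ← Matrix.mul_assoc]
      _ = E * (A * (1 - V * Vᴴ)) * (1 - Pr) := by
          rw [← Matrix.mul_assoc A, ← Matrix.mul_assoc]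
  have hspecE : spec E ≤ 1 := by
    apply spec_proj_le_one
    · rw [hE, conjTranspose_sub, conjTranspose_one, hC3]
    · rw [hE]
      have : (C * Cd) * (C * Cd) = C * Cd := by
        rw [← Matrix.mul_assoc, hC1]
      rw [sub_mul, one_mul, mul_sub, mul_one, this]
      abel
  calc frob (E * A) = frob (E * (A * (1 - V * Vᴴ)) * (1 - Pr)) := by rw [key]
    _ ≤ frob (E * (A * (1 - V * Vᴴ))) * spec (1 - Pr) := frob_mul_le_frob_mul_spec _ _
    _ ≤ (spec E * frob (A * (1 - V * Vᴴ))) * spec (1 - Pr) := by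
        exact mul_le_mul_of_nonneg_right (frob_mul_le_spec_mul_frob _ _) (spec_nonneg _)
    _ ≤ (1 * frob (A * (1 - V * Vᴴ))) * spec (1 - Pr) := by
        exact mul_le_mul_of_nonneg_right
          (mul_le_mul_of_nonneg_right hspecE (frob_nonneg _)) (spec_nonneg _)
    _ = spec (1 - Pr) * frob (A * (1 - V * Vᴴ)) := by ring
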